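/- If G is a connected graph with non-empty edge set and μ(G) = min{√(d(u)·d(v)) : uv ∈ E(G)}, then G is regular or semi-regular bipartite. -/

import Mathlib

open Finset

/-- Spectral radius (largest eigenvalue) of the adjacency matrix of `G`. -/
noncomputable def specRad {V : Type*} [Fintype V] [DecidableEq V] (G : SimpleGraph V) : ℝ :=
  letI : DecidableRel G.Adj := Classical.decRel _
  sSup (spectrum ℝ (G.adjMatrix ℝ))

/-- Degree of a vertex, via `Set.ncard` (no decidability needed). -/
noncomputable def deg {V : Type*} (G : SimpleGraph V) (v : V) : ℕ :=
  (G.neighborSet v).ncard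

/-- One step of the `k`-closure: add one edge between nonadjacent vertices
with degree sum at least `k`. -/
def ClosureStep {V : Type*} (k : ℕ) (G H : SimpleGraph V) : Prop :=
  ∃ u v : V, u ≠ v ∧ ¬ G.Adj u v ∧ k ≤ deg G u + deg G v ∧
    H = G ⊔ SimpleGraph.fromEdgeSet {s(u, v)}

/-- No pair of nonadjacent vertices has degree sum at least `k`. -/
def IsKClosed {V : Type*} (k : ℕ) (H : SimpleGraph V) : Prop :=
  ∀ u v : V, u ≠ v → ¬ H.Adj u v → deg H u + deg H v < k

/-- `H` is a `k`-closure of `G`. -/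
def IsKClosure {V : Type*} (k : ℕ) (G H : SimpleGraph V) : Prop :=
  Relation.ReflTransGen (ClosureStep k) G H ∧ IsKClosed k H

/-- `G` is `s`-connected: more than `s` vertices, and deleting fewer than `s`
vertices leaves a connected graph. -/
def SConnected {V : Type*} [Fintype V] (s : ℕ) (G : SimpleGraph V) : Prop :=
  s < Fintype.card V ∧
    ∀ S : Finset V, S.card < s → (G.induce ((↑S : Set V)ᶜ)).Connected

/-- `G` is `s`-edge-connected: at least two vertices, and deleting fewer than
`s` edges leaves a connected graph. -/
def SEdgeConnected {V : Type*} [Fintype V] (s : ℕ) (G : SimpleGraph V) : Prop :=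
  2 ≤ Fintype.card V ∧
    ∀ F : Finset (Sym2 V), ↑F ⊆ G.edgeSet → F.card < s →
      (G.deleteEdges ↑F).Connected

/-- `G` is `β`-deficient: some matching leaves at most `β` vertices unmatched. -/
def BetaDeficient {V : Type*} [Fintype V] (β : ℕ) (G : SimpleGraph V) : Prop :=
  ∃ M : G.Subgraph, M.IsMatching ∧ Fintype.card V ≤ M.verts.ncard + β

/-- `G` is `s`-path-coverable: the vertices are covered by at most `s`
vertex-disjoint paths. -/
def SPathCoverable {V : Type*} (s : ℕ) (G : SimpleGraph V) : Prop :=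
  ∃ m : ℕ, m ≤ s ∧ ∃ (a b : Fin m → V) (p : ∀ i, G.Walk (a i) (b i)),
    (∀ i, (p i).IsPath) ∧
    (∀ i j, i ≠ j → ∀ x, x ∈ (p i).support → x ∉ (p j).support) ∧
    (∀ x : V, ∃ i, x ∈ (p i).support)

/-- `G` is `s`-Hamiltonian: deleting any at most `s` vertices leaves a
Hamiltonian graph. -/
def SHamiltonian {V : Type*} [Fintype V] [DecidableEq V] (s : ℕ) (G : SimpleGraph V) : Prop :=
  ∀ X : Finset V, X.card ≤ s → (G.induce ((↑X : Set V)ᶜ)).IsHamiltonian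

/-- `G` is `s`-edge-Hamiltonian: any collection of vertex-disjoint paths with
at most `s` edges altogether is contained in a Hamiltonian cycle. -/
def SEdgeHamiltonian {V : Type*} [Fintype V] [DecidableEq V] (s : ℕ) (G : SimpleGraph V) : Prop :=
  ∀ (m : ℕ) (a b : Fin m → V) (p : ∀ i, G.Walk (a i) (b i)),
    (∀ i, (p i).IsPath) →
    (∀ i j, i ≠ j → ∀ x, x ∈ (p i).support → x ∉ (p j).support) →
    (∑ i, (p i).length) ≤ s →
    ∃ (c : V) (w : G.Walk c c), w.IsHamiltonianCycle ∧
      ∀ i, ∀ e ∈ (p i).edges, e ∈ w.edges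

/-- `G` is semi-regular bipartite: all edges go between `X` and its complement,
vertices in `X` all have degree `dX`, vertices outside `X` all have degree `dY`. -/
def IsSemiregularBipartite {V : Type*} (G : SimpleGraph V) : Prop :=
  ∃ (X : Set V) (dX dY : ℕ),
    (∀ u v, G.Adj u v → (u ∈ X ↔ v ∉ X)) ∧
    (∀ u ∈ X, deg G u = dX) ∧
    (∀ u ∉ X, deg G u = dY)

/-- `G ∈ EP_n`: `G = Ḡ₁ ∨ G₂` with `G₁` an `r`-regular graph of order `n-k+r`
and `G₂` a spanning subgraph of `K_{k-r}` (equivalently: outside a set `S` of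
`k-r` vertices the induced graph is `(n-k-1)`-regular, and all pairs between
`S` and its complement are joined). -/
def MemEP {V : Type*} [Fintype V] (n k : ℕ) (G : SimpleGraph V) : Prop :=
  ∃ (r : ℕ) (S : Finset V), r ≤ k ∧ S.card = k - r ∧
    (∀ a ∉ S, ∀ b ∈ S, G.Adj a b) ∧
    (∀ a ∉ S, ((G.neighborSet a) \ (↑S : Set V)).ncard = n - k - 1)

/-- `G ∈ EC_n`: `G = Ḡ₁ ∨ G₂` where `G₁ = (X,Y)` is semi-regular bipartite of
order `n-s+1+r`, with degrees `k-s+2` on `X` and `n-k-1` on `Y`, and `G₂` is an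
arbitrary graph on `s-1-r ≥ 0` vertices. -/
def MemEC {V : Type*} [Fintype V] [DecidableEq V] (n k s : ℕ) (G : SimpleGraph V) : Prop :=
  ∃ (r : ℕ) (X Y S : Finset V) (G₁ : SimpleGraph V),
    Disjoint X Y ∧ Disjoint X S ∧ Disjoint Y S ∧ X ∪ Y ∪ S = Finset.univ ∧
    ((S.card : ℤ) = (s : ℤ) - 1 - r) ∧
    ((X.card : ℤ) + Y.card = (n : ℤ) - s + 1 + r) ∧
    (∀ u v, G₁.Adj u v → (u ∈ X ∧ v ∈ Y) ∨ (u ∈ Y ∧ v ∈ X)) ∧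
    (∀ u ∈ X, ((deg G₁ u : ℤ) = (k : ℤ) - s + 2)) ∧
    (∀ v ∈ Y, ((deg G₁ v : ℤ) = (n : ℤ) - k - 1)) ∧
    (∀ a, a ∈ X ∪ Y → ∀ b ∈ S, G.Adj a b) ∧
    (∀ a ∈ X ∪ Y, ∀ b ∈ X ∪ Y, (G.Adj a b ↔ a ≠ b ∧ ¬ G₁.Adj a b))

/-- `G ∈ ES_n`: `G = Ḡ₁ ∨ G₂` where `G₁ = (X,Y)` is semi-regular bipartite of
order `n-s-1+r`, with degrees `k-s` on `X` and `n-k-1` on `Y`, and `G₂` is an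
arbitrary graph on `s+1-r ≥ 0` vertices. -/
def MemES {V : Type*} [Fintype V] [DecidableEq V] (n k s : ℕ) (G : SimpleGraph V) : Prop :=
  ∃ (r : ℕ) (X Y S : Finset V) (G₁ : SimpleGraph V),
    Disjoint X Y ∧ Disjoint X S ∧ Disjoint Y S ∧ X ∪ Y ∪ S = Finset.univ ∧
    ((S.card : ℤ) = (s : ℤ) + 1 - r) ∧
    ((X.card : ℤ) + Y.card = (n : ℤ) - s - 1 + r) ∧
    (∀ u v, G₁.Adj u v → (u ∈ X ∧ v ∈ Y) ∨ (u ∈ Y ∧ v ∈ X)) ∧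
    (∀ u ∈ X, ((deg G₁ u : ℤ) = (k : ℤ) - s)) ∧
    (∀ v ∈ Y, ((deg G₁ v : ℤ) = (n : ℤ) - k - 1)) ∧
    (∀ a, a ∈ X ∪ Y → ∀ b ∈ S, G.Adj a b) ∧
    (∀ a ∈ X ∪ Y, ∀ b ∈ X ∪ Y, (G.Adj a b ↔ a ≠ b ∧ ¬ G₁.Adj a b))

/-- `G = K_{k+1} + K_{n-k-1}`: the disjoint union of a clique on `k+1` vertices
and a clique on the remaining vertices. -/
def IsCliquePlusClique {V : Type*} [Fintype V] (k : ℕ) (G : SimpleGraph V) : Prop :=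
  ∃ S : Finset V, S.card = k + 1 ∧
    (∀ a ∈ S, ∀ b ∈ S, a ≠ b → G.Adj a b) ∧
    (∀ a ∉ S, ∀ b ∉ S, a ≠ b → G.Adj a b) ∧
    (∀ a ∈ S, ∀ b ∉ S, ¬ G.Adj a b)

/-!
With the test vector `x v = √(d v)` the quadratic form of the adjacency matrix is
`xᵀAx = ∑_v ∑_{u ~ v} √(d u · d v)`, while `xᵀx = ∑_v d v` counts the same ordered pairs of
adjacent vertices. Hence `μ(G) · xᵀx ≥ xᵀAx ≥ min_{uv ∈ E} √(d u · d v) · xᵀx`, and equality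
forces `d u · d v` to be the same for every edge. If `ab` is an edge, a neighbour of a vertex of
degree `d a` then has degree `d b` and vice versa, so along walks from `a` the degrees alternate
between `d a` and `d b`: either they agree and `G` is regular, or the two degree classes form a
semi-regular bipartition.
-/
open Matrix

theorem Matrix.IsHermitian.dotProduct_mulVec_le {n : Type*} [Fintype n] [DecidableEq n]
    {A : Matrix n n ℝ} (hA : A.IsHermitian) {c : ℝ} (hc : ∀ μ ∈ spectrum ℝ A, μ ≤ c)
    (x : n → ℝ) : x ⬝ᵥ (A *ᵥ x) ≤ c * (x ⬝ᵥ x) := by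
  have hpsd : (algebraMap ℝ (Matrix n n ℝ) c - A).PosSemidef := by
    refine posSemidef_iff_isHermitian_and_spectrum_nonneg.2 ⟨?_, ?_⟩
    · exact (IsSelfAdjoint.algebraMap _ (IsSelfAdjoint.all c)).sub hA
    · rw [← spectrum.singleton_sub_eq]
      rintro _ ⟨_, rfl, μ, hμ, rfl⟩
      exact sub_nonneg.2 (hc μ hμ)
  simpa [Algebra.algebraMap_eq_smul_one, sub_mulVec, dotProduct_sub, smul_mulVec] using
    hpsd.dotProduct_mulVec_nonneg x

namespace SimpleGraph

variable {V : Type*}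

theorem Preconnected.forall_of_forall_adj {G : SimpleGraph V} (hG : G.Preconnected)
    {P : V → Prop} (hP : ∀ u v, G.Adj u v → P u → P v) {a : V} (ha : P a) (v : V) :
    P v := by
  obtain ⟨w⟩ := hG a v
  induction w with
  | nil => exact ha
  | cons huv _ ih => exact ih (hP _ _ huv ha)

theorem deg_eq_degree [Fintype V] (G : SimpleGraph V) [DecidableRel G.Adj] (v : V) :
    deg G v = G.degree v := by
  rw [deg, ← card_neighborSet_eq_degree, Set.ncard_eq_toFinset_card', Set.toFinset_card]

theorem deg_pos_of_adj [Finite V] {G : SimpleGraph V} {a b : V} (hab : G.Adj a b) :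
    0 < deg G a :=
  (Set.ncard_pos (Set.toFinite _)).2 ⟨b, hab⟩

theorem dotProduct_adjMatrix_mulVec [Fintype V] (G : SimpleGraph V) [DecidableRel G.Adj]
    {α : Type*} [CommSemiring α] (x : V → α) :
    x ⬝ᵥ (G.adjMatrix α *ᵥ x) = ∑ v, ∑ u ∈ G.neighborFinset v, x v * x u := by
  simp only [dotProduct, adjMatrix_mulVec_apply, mul_sum]

theorem specRad_eq_sSup_spectrum [Fintype V] [DecidableEq V] (G : SimpleGraph V)
    [DecidableRel G.Adj] : specRad G = sSup (spectrum ℝ (G.adjMatrix ℝ)) := by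
  unfold specRad
  congr!

theorem dotProduct_adjMatrix_mulVec_le_specRad [Fintype V] [DecidableEq V] (G : SimpleGraph V)
    [DecidableRel G.Adj] (x : V → ℝ) :
    x ⬝ᵥ (G.adjMatrix ℝ *ᵥ x) ≤ specRad G * (x ⬝ᵥ x) := by
  refine (isHermitian_iff_isSymm.2 G.isSymm_adjMatrix).dotProduct_mulVec_le (fun μ hμ => ?_) x
  rw [specRad_eq_sSup_spectrum]
  exact le_csSup (finite_spectrum _).bddAbove hμ

theorem sqrt_deg_mul_deg_eq_specRad_of_specRad_le [Fintype V] [DecidableEq V]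
    (G : SimpleGraph V) (hρ : ∀ u v, G.Adj u v → specRad G ≤ √((deg G u : ℝ) * deg G v))
    {u v : V} (huv : G.Adj u v) : √((deg G u : ℝ) * deg G v) = specRad G := by
  classical
  set x : V → ℝ := fun v => √(deg G v)
  have hterm :
      ∀ v, ∀ w ∈ G.neighborFinset v, 0 ≤ √((deg G v : ℝ) * deg G w) - specRad G :=
    fun v w hw => sub_nonneg.2 (hρ v w ((mem_neighborFinset G v w).1 hw))
  have hxx : x ⬝ᵥ x = ∑ v, ∑ _w ∈ G.neighborFinset v, (1 : ℝ) := by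
    simp [x, dotProduct, deg_eq_degree]
  have hsum :
      ∑ v, ∑ w ∈ G.neighborFinset v, (√((deg G v : ℝ) * deg G w) - specRad G) ≤ 0 :=
    calc ∑ v, ∑ w ∈ G.neighborFinset v, (√((deg G v : ℝ) * deg G w) - specRad G)
        = x ⬝ᵥ (G.adjMatrix ℝ *ᵥ x) - specRad G * (x ⬝ᵥ x) := by
          simp [x, hxx, dotProduct_adjMatrix_mulVec, sum_sub_distrib, mul_sum, mul_comm]
      _ ≤ 0 := by linarith [G.dotProduct_adjMatrix_mulVec_le_specRad x]
  have hzero := (sum_eq_zero_iff_of_nonneg fun v _ => sum_nonneg (hterm v)).1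
    (le_antisymm hsum (sum_nonneg fun v _ => sum_nonneg (hterm v))) u (mem_univ u)
  have := (sum_eq_zero_iff_of_nonneg (hterm u)).1 hzero v ((mem_neighborFinset G u v).2 huv)
  linarith

theorem deg_eq_of_adj_of_deg_eq [Finite V] {G : SimpleGraph V} {k : ℕ}
    (hk : ∀ u v, G.Adj u v → deg G u * deg G v = k) {a b u v : V} (hab : G.Adj a b)
    (huv : G.Adj u v) (hua : deg G u = deg G a) : deg G v = deg G b :=
  Nat.eq_of_mul_eq_mul_left (deg_pos_of_adj hab) (by rw [hk a b hab, ← hk u v huv, hua])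

theorem regular_or_isSemiregularBipartite_of_deg_mul_deg_eq [Finite V] {G : SimpleGraph V}
    (hG : G.Preconnected) {k : ℕ} (hk : ∀ u v, G.Adj u v → deg G u * deg G v = k) {a b : V}
    (hab : G.Adj a b) : (∃ r : ℕ, ∀ v : V, deg G v = r) ∨ IsSemiregularBipartite G := by
  have forward : ∀ u v, G.Adj u v → deg G u = deg G a → deg G v = deg G b :=
    fun _ _ huv => deg_eq_of_adj_of_deg_eq hk hab huv
  have backward : ∀ u v, G.Adj u v → deg G v = deg G b → deg G u = deg G a :=
    fun _ _ huv => deg_eq_of_adj_of_deg_eq hk hab.symm huv.symm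
  have two_values : ∀ v, deg G v = deg G a ∨ deg G v = deg G b := by
    refine hG.forall_of_forall_adj (fun u v huv => ?_) (Or.inl rfl)
    rintro (hu | hu)
    exacts [Or.inr (forward u v huv hu), Or.inl (backward v u huv.symm hu)]
  by_cases hd : deg G a = deg G b
  · exact Or.inl ⟨deg G a, fun v => (two_values v).elim id (·.trans hd.symm)⟩
  · refine Or.inr ⟨{v | deg G v = deg G a}, deg G a, deg G b,
      fun u v huv => ⟨fun hu hv => hd (hv.symm.trans (forward u v huv hu)),
        fun hv => backward u v huv ((two_values v).resolve_left hv)⟩,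
      fun _ hu => hu, fun u hu => (two_values u).resolve_left hu⟩

end SimpleGraph

/-- If `G` is connected with non-empty edge set and the spectral radius equals
`min{√(d(u)·d(v)) : uv ∈ E(G)}`, then `G` is regular or semi-regular bipartite. -/
theorem stmt_1 {V : Type*} [Fintype V] [DecidableEq V] (G : SimpleGraph V)
    (hconn : G.Connected) (h : G.edgeSet.Nonempty)
    (heq : specRad G =
      sInf {x : ℝ | ∃ u v : V, G.Adj u v ∧ x = Real.sqrt ((deg G u : ℝ) * deg G v)}) :
    (∃ r : ℕ, ∀ v : V, deg G v = r) ∨ IsSemiregularBipartite G := by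
  obtain ⟨⟨a, b⟩, hab⟩ := h
  have hmin : ∀ u v, G.Adj u v → specRad G ≤ √((deg G u : ℝ) * deg G v) := fun u v huv => by
    rw [heq]
    exact csInf_le ⟨0, by rintro _ ⟨_, _, _, rfl⟩; positivity⟩ ⟨u, v, huv, rfl⟩
  have hsqrt := fun u v (huv : G.Adj u v) =>
    G.sqrt_deg_mul_deg_eq_specRad_of_specRad_le hmin huv
  have hk : ∀ u v, G.Adj u v → deg G u * deg G v = deg G a * deg G b := fun u v huv => by
    exact_mod_cast (Real.sqrt_inj (by positivity) (by positivity)).1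
      ((hsqrt u v huv).trans (hsqrt a b hab).symm)
  exact SimpleGraph.regular_or_isSemiregularBipartite_of_deg_mul_deg_eq
    hconn.preconnected hk hab
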